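/- Let n ≥ 1 and let f : Fin n → ℝ → ℝ be density functions integrable on [0,1] with cdfs F_i(t) = ∫_0^t f_i(z) dz satisfying F_i(t) ≥ F_{i+1}(t) for all t ∈ [0,1] and i ∈ {1,…,n−1} (value-ordered). Then for every cut-set x in the standard (n−1)-simplex and every i ∈ {1,…,n}, the total value obtained by agents 1,…,i satisfies Σ_{j=1}^{i} ∫_{s_{j−1}}^{s_j} f_j(z) dz ≥ F_i(s_i), where s_k = x_1 + ⋯ + x_k and s_0 = 0. -/

import Mathlib

/-!
Write `F j` for the cdf of agent `j` and `s j` for the prefix sums of the cut-set, so that agent `j`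
receives `F j (s j) - F j (s (j - 1))`. Value-ordering gives `F j (s (j - 1)) ≤ F (j - 1) (s (j - 1))`,
so adding agent `j`'s value to the bound `F (j - 1) (s (j - 1))` for the first `j - 1` agents yields
at least `F j (s j)`: the claim is a telescoping inequality, proved by induction on `i`.
-/

open MeasureTheory Finset

section Telescoping

variable {α : Type*} [AddCommGroup α] [LinearOrder α] [IsOrderedAddMonoid α]

theorem le_sum_range_sub_of_le (a b : ℕ → α) (hb₀ : b 0 ≤ 0) (i : ℕ)
    (hab : ∀ j < i, b (j + 1) ≤ a j) : a i ≤ ∑ j ∈ range (i + 1), (a j - b j) := by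
  induction i with
  | zero => simpa using hb₀
  | succ i ih =>
    have hprev := ih fun j hj => hab j (by omega)
    have hstep := hab i (by omega)
    rw [sum_range_succ]
    calc a (i + 1) ≤ a i + (a (i + 1) - b (i + 1)) :=
          sub_le_iff_le_add.mp (by rwa [sub_sub_cancel])
      _ ≤ _ := by gcongr

theorem Fin.le_sum_Iic_sub_of_le {n : ℕ} (a b : Fin n → α) (hb₀ : ∀ h : 0 < n, b ⟨0, h⟩ ≤ 0)
    (hab : ∀ (j : ℕ) (hj : j + 1 < n), b ⟨j + 1, hj⟩ ≤ a ⟨j, Nat.lt_of_succ_lt hj⟩)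
    (i : Fin n) : a i ≤ ∑ j ∈ Iic i, (a j - b j) := by
  let extend (g : Fin n → α) (k : ℕ) : α := if h : k < n then g ⟨k, h⟩ else 0
  have hextend (g : Fin n → α) (j : Fin n) : extend g j = g j := dif_pos j.isLt
  have key := le_sum_range_sub_of_le (extend a) (extend b)
    (by simpa [extend, i.pos] using hb₀ i.pos) i
    fun j hj => by simpa [extend, hj.trans i.isLt, show j + 1 < n by omega] using hab j (by omega)
  rw [hextend, Nat.range_succ_eq_Iic, ← Fin.map_valEmbedding_Iic, sum_map] at key
  simpa only [Fin.valEmbedding_apply, hextend] using key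

end Telescoping

theorem sum_mem_Icc_of_mem_stdSimplex {ι : Type*} [Fintype ι] {x : ι → ℝ}
    (hx : x ∈ stdSimplex ℝ ι) (s : Finset ι) : ∑ k ∈ s, x k ∈ Set.Icc (0 : ℝ) 1 :=
  ⟨sum_nonneg fun k _ => hx.1 k,
    hx.2 ▸ sum_le_sum_of_subset_of_nonneg (subset_univ s) fun k _ _ => hx.1 k⟩

theorem MeasureTheory.IntegrableOn.intervalIntegrable_of_mem_Icc {f : ℝ → ℝ} {a b t : ℝ}
    (hf : IntegrableOn f (Set.Icc a b)) (ht : t ∈ Set.Icc a b) :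
    IntervalIntegrable f volume a t :=
  IntegrableOn.intervalIntegrable <|
    hf.mono_set <| by rw [Set.uIcc_of_le ht.1]; exact Set.Icc_subset_Icc_right ht.2

theorem value_ordered_prefix_bound_general (n : ℕ) (f : Fin n → ℝ → ℝ)
    (hint : ∀ i, IntegrableOn (f i) (Set.Icc 0 1))
    (hord : ∀ (i : ℕ) (hi : i + 1 < n), ∀ t ∈ Set.Icc (0:ℝ) 1,
      (∫ z in (0:ℝ)..t, f ⟨i + 1, hi⟩ z) ≤ ∫ z in (0:ℝ)..t, f ⟨i, Nat.lt_of_succ_lt hi⟩ z)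
    (x : Fin n → ℝ) (hx : x ∈ stdSimplex ℝ (Fin n)) (i : Fin n) :
    (∫ z in (0:ℝ)..(∑ k ∈ Finset.Iic i, x k), f i z) ≤
      ∑ j ∈ Finset.Iic i,
        ∫ z in (∑ k ∈ Finset.Iio j, x k)..(∑ k ∈ Finset.Iic j, x k), f j z := by
  have hS := sum_mem_Icc_of_mem_stdSimplex hx
  have hval (j : Fin n) : ∫ z in (∑ k ∈ Iio j, x k)..(∑ k ∈ Iic j, x k), f j z =
      (∫ z in (0:ℝ)..(∑ k ∈ Iic j, x k), f j z) - ∫ z in (0:ℝ)..(∑ k ∈ Iio j, x k), f j z :=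
    (intervalIntegral.integral_interval_sub_left ((hint j).intervalIntegrable_of_mem_Icc (hS _))
      ((hint j).intervalIntegrable_of_mem_Icc (hS _))).symm
  rw [sum_congr rfl fun j _ => hval j]
  refine Fin.le_sum_Iic_sub_of_le (fun j => ∫ z in (0:ℝ)..(∑ k ∈ Iic j, x k), f j z)
    (fun j => ∫ z in (0:ℝ)..(∑ k ∈ Iio j, x k), f j z) (fun h => ?_) (fun j hj => ?_) i
  · have hIio_zero : Iio (⟨0, h⟩ : Fin n) = ∅ := by ext k; simp [Fin.lt_def]
    simp [hIio_zero]
  · have hIio_succ : Iio (⟨j + 1, hj⟩ : Fin n) = Iic ⟨j, Nat.lt_of_succ_lt hj⟩ := by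
      ext k; simp [Fin.lt_def, Fin.le_def]
    simpa only [hIio_succ] using hord j hj _ (hS _)

/-- **Inductive claim for value-ordered instances**: in a value-ordered instance,
for every cut-set `x` and every agent `i`, the total value obtained by agents
`1, …, i` is at least `F i (s i)`, where `s i = ∑ k ≤ i, x k`. -/
theorem value_ordered_prefix_bound (n : ℕ) (hn : 1 ≤ n) (f : Fin n → ℝ → ℝ)
    (hint : ∀ i, IntegrableOn (f i) (Set.Icc 0 1))
    (hord : ∀ (i : ℕ) (hi : i + 1 < n), ∀ t ∈ Set.Icc (0:ℝ) 1,
      (∫ z in (0:ℝ)..t, f ⟨i + 1, hi⟩ z) ≤ ∫ z in (0:ℝ)..t, f ⟨i, Nat.lt_of_succ_lt hi⟩ z)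
    (x : Fin n → ℝ) (hx : x ∈ stdSimplex ℝ (Fin n)) (i : Fin n) :
    (∫ z in (0:ℝ)..(∑ k ∈ Finset.Iic i, x k), f i z) ≤
      ∑ j ∈ Finset.Iic i,
        ∫ z in (∑ k ∈ Finset.Iio j, x k)..(∑ k ∈ Finset.Iic j, x k), f j z :=
  value_ordered_prefix_bound_general n f hint hord x hx i
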